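/- arXiv:2208.10005 — 3 statements merged into one kernel-verified Lean document; each statement's English description precedes it below -/
import Mathlib

section
/- If B is a normal n×n complex matrix, then for every n×n complex matrix A, r(A,B) ≤ ‖A‖²‖B‖². -/
open Matrix Complex BigOperators

/-- Squared Frobenius (Hilbert-Schmidt) norm: ‖X‖² = tr(X*X). -/
noncomputable def frobSq {n : ℕ} (X : Matrix (Fin n) (Fin n) ℂ) : ℝ :=
  (Matrix.trace (Xᴴ * X)).re

/-- Hilbert-Schmidt inner product ⟨X,Y⟩ = tr(X*Y). -/
noncomputable def hsInner {n : ℕ} (X Y : Matrix (Fin n) (Fin n) ℂ) : ℂ :=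
  Matrix.trace (Xᴴ * Y)

/-- f(A,B;q) = Re⟨[B,A],[B,A]_q⟩ where [X,Y]_q = XY − qYX. -/
noncomputable def fFun {n : ℕ} (A B : Matrix (Fin n) (Fin n) ℂ) (q : ℝ) : ℝ :=
  (hsInner (B * A - A * B) (B * A - (q : ℂ) • (A * B))).re

/-- r(A,B) = (1/2)(⟨[B,A],BA⟩ + ⟨[B,A*],BA*⟩). -/
noncomputable def rFun {n : ℕ} (A B : Matrix (Fin n) (Fin n) ℂ) : ℂ :=
  (1/2 : ℂ) * (hsInner (B * A - A * B) (B * A) + hsInner (B * Aᴴ - Aᴴ * B) (B * Aᴴ))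

/-- c(q) = ((1+q) + √(2(1+q²)))/2. -/
noncomputable def cq (q : ℝ) : ℝ := ((1 + q) + Real.sqrt (2 * (1 + q ^ 2))) / 2

/-!
For normal `B`, cyclicity of the trace turns `r(A,B)` into `‖[B,A]‖² / 2`. Write `B = H + iK`
with `H, K` Hermitian; normality makes them commute, and then `[B,A] = [H,A] + i[K,A]` is an
orthogonal decomposition, as is `B = H + iK` itself. In an eigenbasis of `H`,
`[H,A]ᵢⱼ = (hᵢ - hⱼ) Aᵢⱼ` with `|hᵢ - hⱼ|² ≤ 2‖H‖²`, so `‖[H,A]‖² ≤ 2‖H‖²‖A‖²`, and summing the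
two parts gives `‖[B,A]‖² ≤ 2‖A‖²‖B‖²`.
-/

open Unitary
open scoped ComplexStarModule

section

variable {n : ℕ}

theorem frobSq_eq_sum_normSq (X : Matrix (Fin n) (Fin n) ℂ) :
    frobSq X = ∑ i, ∑ j, normSq (X i j) := by
  simp only [frobSq, trace, diag, mul_apply, conjTranspose_apply, re_sum]
  rw [Finset.sum_comm]
  simp [mul_comm, mul_conj]

theorem trace_conjStarAlgAut (u : unitary (Matrix (Fin n) (Fin n) ℂ))
    (X : Matrix (Fin n) (Fin n) ℂ) : trace (conjStarAlgAut ℂ _ u X) = trace X := by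
  rw [conjStarAlgAut_apply, trace_mul_cycle, coe_star_mul_self, one_mul]

theorem frobSq_conjStarAlgAut (u : unitary (Matrix (Fin n) (Fin n) ℂ))
    (X : Matrix (Fin n) (Fin n) ℂ) : frobSq (conjStarAlgAut ℂ _ u X) = frobSq X := by
  rw [frobSq, ← star_eq_conjTranspose, ← map_star, ← map_mul, trace_conjStarAlgAut]
  rfl

theorem frobSq_diagonal (d : Fin n → ℂ) : frobSq (diagonal d) = ∑ i, normSq (d i) := by
  rw [frobSq_eq_sum_normSq]
  refine Finset.sum_congr rfl fun i _ => ?_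
  rw [Finset.sum_eq_single i (fun j _ hji => by simp [diagonal_apply_ne _ hji.symm])
    (by simp), diagonal_apply_eq]

theorem normSq_sub_le_two_mul_sum (d : Fin n → ℂ) (i j : Fin n) :
    normSq (d i - d j) ≤ 2 * ∑ k, normSq (d k) := by
  rcases eq_or_ne i j with rfl | hij
  · simpa using Finset.sum_nonneg fun k _ => normSq_nonneg (d k)
  · have hpair : normSq (d i) + normSq (d j) ≤ ∑ k, normSq (d k) := by
      rw [← Finset.sum_pair (f := fun k => normSq (d k)) hij]
      exact Finset.sum_le_sum_of_subset_of_nonneg (Finset.subset_univ _)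
        fun k _ _ => normSq_nonneg _
    have hpar : normSq (d i - d j) + normSq (d i + d j) = 2 * (normSq (d i) + normSq (d j)) := by
      rw [normSq_sub, normSq_add]; ring
    linarith [normSq_nonneg (d i + d j)]

theorem frobSq_diagonal_mul_sub_mul_diagonal_le (d : Fin n → ℂ) (M : Matrix (Fin n) (Fin n) ℂ) :
    frobSq (diagonal d * M - M * diagonal d) ≤ 2 * frobSq (diagonal d) * frobSq M := by
  have hentry : ∀ i j, (diagonal d * M - M * diagonal d) i j = (d i - d j) * M i j := by
    intro i j
    simp only [Matrix.sub_apply, diagonal_mul, mul_diagonal]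
    ring
  rw [frobSq_eq_sum_normSq (_ - _), frobSq_eq_sum_normSq M, frobSq_diagonal, Finset.mul_sum]
  refine Finset.sum_le_sum fun i _ => ?_
  rw [Finset.mul_sum]
  refine Finset.sum_le_sum fun j _ => ?_
  rw [hentry, normSq_mul]
  exact mul_le_mul_of_nonneg_right (normSq_sub_le_two_mul_sum d i j) (normSq_nonneg _)

theorem Matrix.IsHermitian.frobSq_mul_sub_mul_le {H : Matrix (Fin n) (Fin n) ℂ}
    (hH : H.IsHermitian) (A : Matrix (Fin n) (Fin n) ℂ) :
    frobSq (H * A - A * H) ≤ 2 * frobSq H * frobSq A := by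
  set φ := conjStarAlgAut ℂ _ hH.eigenvectorUnitary
  set D : Matrix (Fin n) (Fin n) ℂ := diagonal (RCLike.ofReal ∘ hH.eigenvalues)
  have hHD : H = φ D := hH.spectral_theorem
  obtain ⟨M, rfl⟩ := EquivLike.surjective φ A
  rw [hHD, ← map_mul, ← map_mul, ← map_sub, frobSq_conjStarAlgAut, frobSq_conjStarAlgAut,
    frobSq_conjStarAlgAut]
  exact frobSq_diagonal_mul_sub_mul_diagonal_le _ M

theorem frobSq_add_I_smul {X Y : Matrix (Fin n) (Fin n) ℂ} (h : hsInner X Y = hsInner Y X) :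
    frobSq (X + I • Y) = frobSq X + frobSq Y := by
  have hexp : (X + I • Y)ᴴ * (X + I • Y) = Xᴴ * X + Yᴴ * Y + I • (Xᴴ * Y - Yᴴ * X) := by
    simp only [conjTranspose_add, conjTranspose_smul, star_def, conj_I, add_mul, mul_add,
      Matrix.smul_mul, Matrix.mul_smul, smul_smul, neg_mul, I_mul_I, neg_neg, neg_smul, one_smul]
    module
  rw [frobSq, hexp, trace_add, trace_add, trace_smul, trace_sub]
  rw [hsInner, hsInner] at h
  rw [h, sub_self, smul_zero, add_zero, add_re]
  rfl

theorem hsInner_commutator_comm {H K : Matrix (Fin n) (Fin n) ℂ} (hH : H.IsHermitian)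
    (hK : K.IsHermitian) (hHK : Commute H K) (A : Matrix (Fin n) (Fin n) ℂ) :
    hsInner (H * A - A * H) (K * A - A * K) = hsInner (K * A - A * K) (H * A - A * H) := by
  simp only [hsInner, conjTranspose_sub, conjTranspose_mul, hH.eq, hK.eq, sub_mul, mul_sub,
    trace_sub, mul_assoc]
  have h1 : trace (Aᴴ * (H * (K * A))) = trace (Aᴴ * (K * (H * A))) := by
    rw [← mul_assoc H, hHK.eq, mul_assoc]
  have h2 : trace (Aᴴ * (H * (A * K))) = trace (K * (Aᴴ * (H * A))) := by
    rw [trace_mul_comm K]; simp only [mul_assoc]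
  have h3 : trace (H * (Aᴴ * (K * A))) = trace (Aᴴ * (K * (A * H))) := by
    rw [trace_mul_comm H]; simp only [mul_assoc]
  have h4 : trace (H * (Aᴴ * (A * K))) = trace (K * (Aᴴ * (A * H))) := by
    rw [trace_mul_comm H, trace_mul_comm K]; simp only [mul_assoc, hHK.eq]
  rw [h1, h2, h3, h4]
  ring

theorem rFun_eq_of_normal (A : Matrix (Fin n) (Fin n) ℂ) {B : Matrix (Fin n) (Fin n) ℂ}
    (hB : B * Bᴴ = Bᴴ * B) :
    rFun A B = (1 / 2 : ℂ) * hsInner (B * A - A * B) (B * A - A * B) := by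
  have e1 : trace (A * (Bᴴ * (B * Aᴴ))) = trace (Bᴴ * (Aᴴ * (A * B))) :=
    calc trace (A * (Bᴴ * (B * Aᴴ))) = trace ((Bᴴ * B) * (Aᴴ * A)) := by
          rw [trace_mul_comm]; simp only [mul_assoc]
      _ = trace ((Aᴴ * A) * (B * Bᴴ)) := by rw [← hB, trace_mul_comm]
      _ = trace (Bᴴ * (Aᴴ * (A * B))) := by rw [trace_mul_comm Bᴴ]; simp only [mul_assoc]
  have e2 : trace (Bᴴ * (A * (B * Aᴴ))) = trace (Aᴴ * (Bᴴ * (A * B))) := by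
    rw [trace_mul_comm Aᴴ]; simp only [mul_assoc]
  have hstar : hsInner (B * Aᴴ - Aᴴ * B) (B * Aᴴ) = -hsInner (B * A - A * B) (A * B) := by
    simp only [hsInner, conjTranspose_sub, conjTranspose_mul, conjTranspose_conjTranspose,
      sub_mul, trace_sub, mul_assoc]
    rw [e1, e2]
    ring
  rw [rFun, hstar]
  simp only [hsInner, mul_sub, trace_sub]
  ring

theorem frobSq_commutator_le_of_normal {B : Matrix (Fin n) (Fin n) ℂ} (hB : B * Bᴴ = Bᴴ * B)
    (A : Matrix (Fin n) (Fin n) ℂ) : frobSq (B * A - A * B) ≤ 2 * frobSq A * frobSq B := by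
  have : IsStarNormal B := ⟨hB.symm⟩
  set H : Matrix (Fin n) (Fin n) ℂ := ↑(ℜ B)
  set K : Matrix (Fin n) (Fin n) ℂ := ↑(ℑ B)
  have hH : H.IsHermitian := (ℜ B).2
  have hK : K.IsHermitian := (ℑ B).2
  have hBHK : B = H + I • K := (realPart_add_I_smul_imaginaryPart B).symm
  have hfrobB : frobSq B = frobSq H + frobSq K := by
    rw [hBHK]
    exact frobSq_add_I_smul (by rw [hsInner, hsInner, hH.eq, hK.eq, trace_mul_comm])
  have hcomm : B * A - A * B = (H * A - A * H) + I • (K * A - A * K) := by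
    rw [hBHK]
    simp only [add_mul, mul_add, Matrix.smul_mul, Matrix.mul_smul, smul_sub]
    abel
  calc frobSq (B * A - A * B) = frobSq (H * A - A * H) + frobSq (K * A - A * K) := by
        rw [hcomm, frobSq_add_I_smul
          (hsInner_commutator_comm hH hK (Commute.realPart_imaginaryPart B) A)]
    _ ≤ 2 * frobSq H * frobSq A + 2 * frobSq K * frobSq A :=
        add_le_add (hH.frobSq_mul_sub_mul_le A) (hK.frobSq_mul_sub_mul_le A)
    _ = 2 * frobSq A * frobSq B := by rw [hfrobB]; ring

end

theorem r_bound_of_normal (n : ℕ) (A B : Matrix (Fin n) (Fin n) ℂ)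
    (hB : B * Bᴴ = Bᴴ * B) :
    (rFun A B).re ≤ frobSq A * frobSq B := by
  have hre : (rFun A B).re = frobSq (B * A - A * B) / 2 := by
    rw [rFun_eq_of_normal A hB, one_div, ← ofReal_ofNat, ← ofReal_inv, re_ofReal_mul,
      frobSq, hsInner, inv_mul_eq_div]
  linarith [hre, frobSq_commutator_le_of_normal hB A]
end

section
/- For all n×n complex matrices A and B, Re r(A,B) ≤ √2 ‖A‖²‖B‖². -/
open Matrix Complex BigOperators

/-!
Write `A = H + iK` with `H`, `K` Hermitian. The cross terms of `r` cancel, so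
`r(A, B) = ⟨[B, H], BH⟩ + ⟨[B, K], BK⟩`, while `‖A‖² = ‖H‖² + ‖K‖²`. For a Hermitian `X`,
diagonalise `X = U diag(d) U*` and put `C = U* B U`; then
`Re ⟨[B, X], BX⟩ = ∑ i j, (dᵢ² - dᵢ dⱼ) |C_ji|²` and `‖B‖² = ∑ i j, |C_ji|²`. Each coefficient
`dᵢ² - dᵢ dⱼ` is at most `√2 ∑ₖ dₖ²`: it vanishes for `i = j`, and `s² - st ≤ √2 (s² + t²)`.
-/

theorem sq_sub_mul_le_sqrt_two_mul (s t : ℝ) : s ^ 2 - s * t ≤ √2 * (s ^ 2 + t ^ 2) := by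
  have h2 : (7 / 5 : ℝ) ≤ √2 := Real.le_sqrt_of_sq_le (by norm_num)
  nlinarith [sq_nonneg (s + t), sq_nonneg (s + 2 * t), sq_nonneg (2 * s + t)]

section
variable {ι : Type*} [Fintype ι]

theorem sq_sub_mul_le_sqrt_two_mul_sum_sq (d : ι → ℝ) (i j : ι) :
    d i ^ 2 - d i * d j ≤ √2 * ∑ k, d k ^ 2 := by
  rcases eq_or_ne i j with rfl | hij
  · rw [sq, sub_self]
    positivity
  · classical
    have hpair : d i ^ 2 + d j ^ 2 ≤ ∑ k, d k ^ 2 := by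
      rw [← Finset.sum_pair (f := fun k => d k ^ 2) hij]
      exact Finset.sum_le_univ_sum_of_nonneg fun k => sq_nonneg (d k)
    exact (sq_sub_mul_le_sqrt_two_mul _ _).trans (by gcongr)

theorem sum_sum_sq_sub_mul_mul_le (d : ι → ℝ) {c : ι → ι → ℝ} (hc : ∀ i j, 0 ≤ c i j) :
    ∑ i, ∑ j, (d i ^ 2 - d i * d j) * c i j ≤ √2 * (∑ k, d k ^ 2) * ∑ i, ∑ j, c i j := by
  rw [Finset.mul_sum]
  gcongr with i _
  rw [Finset.mul_sum]
  gcongr with j _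
  exacts [hc i j, sq_sub_mul_le_sqrt_two_mul_sum_sq d i j]

end

section
variable {𝕜 ι : Type*} [RCLike 𝕜] [Fintype ι]

open Unitary in
theorem trace_conjTranspose_mul_conjStarAlgAut [DecidableEq ι] (u : unitary (Matrix ι ι 𝕜))
    (P Q : Matrix ι ι 𝕜) :
    ((conjStarAlgAut 𝕜 _ u P)ᴴ * conjStarAlgAut 𝕜 _ u Q).trace = (Pᴴ * Q).trace := by
  rw [← star_eq_conjTranspose, ← map_star, ← map_mul, conjStarAlgAut_apply, trace_mul_cycle,
    coe_star_mul_self, one_mul, star_eq_conjTranspose]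

theorem trace_conjTranspose_mul (P Q : Matrix ι ι 𝕜) :
    (Pᴴ * Q).trace = ∑ i, ∑ j, star (P j i) * Q j i := by
  simp [trace, mul_apply]

theorem re_trace_conjTranspose_mul_self (C : Matrix ι ι 𝕜) :
    RCLike.re (Cᴴ * C).trace = ∑ i, ∑ j, ‖C j i‖ ^ 2 := by
  simp only [trace_conjTranspose_mul, RCLike.star_def, RCLike.conj_mul, map_sum]
  norm_cast

theorem re_trace_commutator_diagonal [DecidableEq ι] (C : Matrix ι ι 𝕜) (d : ι → ℝ) :
    let D := diagonal (RCLike.ofReal ∘ d : ι → 𝕜)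
    RCLike.re ((C * D - D * C)ᴴ * (C * D)).trace =
      ∑ i, ∑ j, (d i ^ 2 - d i * d j) * ‖C j i‖ ^ 2 := by
  simp only [trace_conjTranspose_mul, map_sum, Matrix.sub_apply, mul_diagonal, diagonal_mul,
    Function.comp_apply, star_sub, star_mul', RCLike.star_def, RCLike.conj_ofReal]
  refine Finset.sum_congr rfl fun i _ => Finset.sum_congr rfl fun j _ => ?_
  rw [show ((starRingEnd 𝕜) (C j i) * d i - d j * (starRingEnd 𝕜) (C j i)) * (C j i * d i)
    = ((d i ^ 2 - d i * d j : ℝ) : 𝕜) * ((starRingEnd 𝕜) (C j i) * C j i) by push_cast; ring,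
    RCLike.conj_mul]
  norm_cast

theorem re_trace_diagonal_conjTranspose_mul_self [DecidableEq ι] (d : ι → ℝ) :
    RCLike.re ((diagonal (RCLike.ofReal ∘ d : ι → 𝕜))ᴴ * diagonal (RCLike.ofReal ∘ d)).trace =
      ∑ i, d i ^ 2 := by
  simp [diagonal_conjTranspose, trace_diagonal, sq]

open Unitary in
theorem re_trace_commutator_mul_le_of_isHermitian [DecidableEq ι] {X : Matrix ι ι 𝕜}
    (hX : X.IsHermitian) (B : Matrix ι ι 𝕜) :
    RCLike.re ((B * X - X * B)ᴴ * (B * X)).trace ≤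
      √2 * RCLike.re (Xᴴ * X).trace * RCLike.re (Bᴴ * B).trace := by
  set φ := conjStarAlgAut 𝕜 _ hX.eigenvectorUnitary
  set d := hX.eigenvalues
  set D := diagonal (RCLike.ofReal ∘ d : ι → 𝕜)
  have hXD : X = φ D := hX.spectral_theorem
  obtain ⟨C, rfl⟩ : ∃ C, φ C = B := φ.surjective B
  calc RCLike.re ((φ C * X - X * φ C)ᴴ * (φ C * X)).trace
      = RCLike.re ((C * D - D * C)ᴴ * (C * D)).trace := by
        rw [hXD, ← map_mul, ← map_mul, ← map_sub, trace_conjTranspose_mul_conjStarAlgAut]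
    _ = ∑ i, ∑ j, (d i ^ 2 - d i * d j) * ‖C j i‖ ^ 2 := re_trace_commutator_diagonal C d
    _ ≤ √2 * (∑ k, d k ^ 2) * ∑ i, ∑ j, ‖C j i‖ ^ 2 :=
        sum_sum_sq_sub_mul_mul_le _ fun i j => by positivity
    _ = √2 * RCLike.re (Xᴴ * X).trace * RCLike.re ((φ C)ᴴ * φ C).trace := by
        rw [hXD, trace_conjTranspose_mul_conjStarAlgAut, trace_conjTranspose_mul_conjStarAlgAut,
          re_trace_diagonal_conjTranspose_mul_self, re_trace_conjTranspose_mul_self]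

end

section
variable {n : ℕ} {H K : Matrix (Fin n) (Fin n) ℂ}

theorem rFun_add_I_smul (hH : H.IsHermitian) (hK : K.IsHermitian) (B : Matrix (Fin n) (Fin n) ℂ) :
    rFun (H + I • K) B = hsInner (B * H - H * B) (B * H) + hsInner (B * K - K * B) (B * K) := by
  simp only [rFun, hsInner, conjTranspose_add, conjTranspose_smul, conjTranspose_sub,
    conjTranspose_mul, hH.eq, hK.eq, star_def, map_neg, conj_I, mul_add, add_mul, mul_sub, sub_mul,
    smul_mul_assoc, mul_smul_comm, smul_sub, trace_add, trace_sub, trace_smul, smul_eq_mul]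
  ring_nf
  rw [I_sq]
  ring

theorem frobSq_add_I_smul_s4 (hH : H.IsHermitian) (hK : K.IsHermitian) :
    frobSq (H + I • K) = frobSq H + frobSq K := by
  have hcomm : (K * H).trace = (H * K).trace := trace_mul_comm K H
  simp only [frobSq, conjTranspose_add, conjTranspose_smul, hH.eq, hK.eq, star_def, conj_I,
    mul_add, add_mul, smul_mul_assoc, mul_smul_comm, trace_add, trace_smul, smul_eq_mul, hcomm]
  ring_nf
  rw [I_sq]
  simp

end

theorem r_loose_bound (n : ℕ) (A B : Matrix (Fin n) (Fin n) ℂ) :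
    (rFun A B).re ≤ Real.sqrt 2 * frobSq A * frobSq B := by
  have hH : (realPart A : Matrix (Fin n) (Fin n) ℂ).IsHermitian := (realPart A).2
  have hK : (imaginaryPart A : Matrix (Fin n) (Fin n) ℂ).IsHermitian := (imaginaryPart A).2
  rw [← realPart_add_I_smul_imaginaryPart A, rFun_add_I_smul hH hK, frobSq_add_I_smul_s4 hH hK,
    add_re, mul_add, add_mul]
  exact add_le_add (re_trace_commutator_mul_le_of_isHermitian hH B)
    (re_trace_commutator_mul_le_of_isHermitian hK B)
end

section
/- For all n×n complex matrices A, B and all q ∈ ℝ, c(q)‖A‖²‖B‖² − f(A,B;q) equals c Σ_{D₄}|a_{ij}|²|b_{kℓ}|² + (c−1)Σ_{D₂}|a_{ij}|²|b_{kℓ}|² + (c−q)Σ_{D₃}|a_{ij}|²|b_{kℓ}|² + (c−1−q)Σ_{D₁}|a_{ij}|²|b_{kℓ}|² − Σ_{i≠k} a_{ij}·conj(a_{kj})·b_{ℓi}·conj(b_{ℓk}) − q Σ_{j≠ℓ} a_{ij}·conj(a_{iℓ})·b_{jk}·conj(b_{ℓk}) + (1+q) Σ_{(i,j,k,ℓ)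 ≠ (i,i,i,i)} Re(a_{ij}·conj(a_{ℓk})·b_{jk}·conj(b_{iℓ})), where c = c(q). -/
/-!
Expanding the Hilbert–Schmidt products entrywise, f(A,B;q) = ‖BA‖² + q‖AB‖² − (1+q) Re⟨BA, AB⟩,
and each of the three quadruple sums splits into an off-diagonal part and a diagonal part
(i = k, j = ℓ, resp. i = j = k = ℓ) in which only the moduli |a_ij|²|b_kℓ|² survive. After
reindexing, these diagonal parts are the sums of |a_ij|²|b_kℓ|² over {ℓ = i} = D₀ ⊔ D₁ ⊔ D₂,
{k = j} = D₀ ⊔ D₁ ⊔ D₃ and D₀, while ‖A‖²‖B‖² is the sum over D₁ ⊔ D₂ ⊔ D₃ ⊔ D₄ (note D₀ ⊆ D₄).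
The identity is then linear in these partial sums.
-/

open Matrix Complex BigOperators

/-- Membership in D₁ = {(i,j,j,i) : i ≠ j}. -/
def inD1 {n : ℕ} (i j k l : Fin n) : Prop := j = k ∧ l = i ∧ i ≠ j

/-- Membership in D₂ = {(i,j,k,i) : j ≠ k}. -/
def inD2 {n : ℕ} (i j k l : Fin n) : Prop := l = i ∧ j ≠ k

/-- Membership in D₃ = {(i,j,j,k) : i ≠ k}. -/
def inD3 {n : ℕ} (i j k l : Fin n) : Prop := j = k ∧ i ≠ l

/-- Membership in D₄, the complement of D₁ ∪ D₂ ∪ D₃. -/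
def inD4 {n : ℕ} (i j k l : Fin n) : Prop :=
  ¬ inD1 i j k l ∧ ¬ inD2 i j k l ∧ ¬ inD3 i j k l

/-- Membership in D₀ = {(i,i,i,i)}. -/
def inD0 {n : ℕ} (i j k l : Fin n) : Prop := i = j ∧ j = k ∧ k = l

open ComplexConjugate

lemma mul_conj_mul_mul_conj (z w : ℂ) :
    z * conj z * w * conj w = ((normSq z * normSq w : ℝ) : ℂ) := by
  rw [ofReal_mul, ← mul_conj, ← mul_conj]
  ring

lemma ite_not_eq_sub {M : Type*} [AddGroup M] (p : Prop) [Decidable p] (x : M) :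
    (if ¬p then x else 0) = x - if p then x else 0 := by
  split_ifs <;> simp

section HilbertSchmidt

variable {n : ℕ}

lemma hsInner_eq_sum (X Y : Matrix (Fin n) (Fin n) ℂ) :
    hsInner X Y = ∑ i, ∑ j, conj (X i j) * Y i j := by
  rw [hsInner, trace, Finset.sum_comm]
  simp [mul_apply]

lemma conj_hsInner (X Y : Matrix (Fin n) (Fin n) ℂ) : conj (hsInner X Y) = hsInner Y X := by
  rw [hsInner, hsInner, ← Complex.star_def, ← trace_conjTranspose, conjTranspose_mul,
    conjTranspose_conjTranspose]

lemma re_hsInner_comm (X Y : Matrix (Fin n) (Fin n) ℂ) :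
    (hsInner X Y).re = (hsInner Y X).re := by
  rw [← conj_hsInner, conj_re]

lemma hsInner_self (X : Matrix (Fin n) (Fin n) ℂ) : hsInner X X = frobSq X := by
  rw [frobSq, ← hsInner, eq_comm, ← conj_eq_iff_re, conj_hsInner]

lemma frobSq_eq_sum (X : Matrix (Fin n) (Fin n) ℂ) :
    (frobSq X : ℂ) = ∑ i, ∑ j, ((normSq (X i j) : ℝ) : ℂ) := by
  rw [← hsInner_self, hsInner_eq_sum]
  simp [Complex.normSq_eq_conj_mul_self]

lemma ofReal_fFun (A B : Matrix (Fin n) (Fin n) ℂ) (q : ℝ) : (fFun A B q : ℂ) =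
    hsInner (B * A) (B * A) + q * hsInner (A * B) (A * B)
      - (1 + q) * (hsInner (B * A) (A * B)).re := by
  have hsub : hsInner (B * A - A * B) (B * A - (q : ℂ) • (A * B)) = hsInner (B * A) (B * A)
      - q * hsInner (B * A) (A * B) - hsInner (A * B) (B * A) + q * hsInner (A * B) (A * B) := by
    simp only [hsInner, conjTranspose_sub, sub_mul, mul_sub, Matrix.mul_smul, trace_sub, trace_smul,
      smul_eq_mul]
    ring
  rw [hsInner_self, hsInner_self, fFun, hsub, frobSq, frobSq, ← hsInner, ← hsInner]
  simp only [sub_re, add_re, re_ofReal_mul]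
  rw [re_hsInner_comm (A * B) (B * A)]
  push_cast
  ring

lemma frobSq_mul_frobSq_eq_sum (A B : Matrix (Fin n) (Fin n) ℂ) : ((frobSq A * frobSq B : ℝ) : ℂ) =
    ∑ i, ∑ j, ∑ k, ∑ l, ((normSq (A i j) * normSq (B k l) : ℝ) : ℂ) := by
  simp only [ofReal_mul, frobSq_eq_sum, Finset.sum_mul]
  simp only [Finset.mul_sum]

lemma hsInner_ba_ba_eq_sum (a b : Matrix (Fin n) (Fin n) ℂ) : hsInner (b * a) (b * a) =
    ∑ i, ∑ j, ∑ k, ∑ l, a i j * conj (a k j) * b l i * conj (b l k) := by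
  simp only [hsInner_eq_sum, mul_apply, map_sum, map_mul, Finset.sum_mul, Finset.mul_sum,
    ← Fintype.sum_prod_type']
  refine Fintype.sum_equiv
    ⟨fun ⟨l, j, i, k⟩ => ⟨i, j, k, l⟩, fun ⟨i, j, k, l⟩ => ⟨l, j, i, k⟩, fun _ => rfl, fun _ => rfl⟩
    _ _ fun _ => ?_
  simp only [Equiv.coe_fn_mk]
  ring

lemma hsInner_ab_ab_eq_sum (a b : Matrix (Fin n) (Fin n) ℂ) : hsInner (a * b) (a * b) =
    ∑ i, ∑ j, ∑ k, ∑ l, a i j * conj (a i l) * b j k * conj (b l k) := by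
  simp only [hsInner_eq_sum, mul_apply, map_sum, map_mul, Finset.sum_mul, Finset.mul_sum,
    ← Fintype.sum_prod_type']
  refine Fintype.sum_equiv
    ⟨fun ⟨i, k, j, l⟩ => ⟨i, j, k, l⟩, fun ⟨i, j, k, l⟩ => ⟨i, k, j, l⟩, fun _ => rfl, fun _ => rfl⟩
    _ _ fun _ => ?_
  simp only [Equiv.coe_fn_mk]
  ring

lemma hsInner_ba_ab_eq_sum (a b : Matrix (Fin n) (Fin n) ℂ) : hsInner (b * a) (a * b) =
    ∑ i, ∑ j, ∑ k, ∑ l, a i j * conj (a l k) * b j k * conj (b i l) := by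
  simp only [hsInner_eq_sum, mul_apply, map_sum, map_mul, Finset.sum_mul, Finset.mul_sum,
    ← Fintype.sum_prod_type']
  refine Fintype.sum_equiv
    ⟨fun ⟨i, k, j, l⟩ => ⟨i, j, k, l⟩, fun ⟨i, j, k, l⟩ => ⟨i, k, j, l⟩, fun _ => rfl, fun _ => rfl⟩
    _ _ fun _ => ?_
  simp only [Equiv.coe_fn_mk]
  ring

end HilbertSchmidt

section IndexSets

open Classical

variable {n : ℕ} {M : Type*} [AddCommMonoid M] (x : Fin n → Fin n → Fin n → Fin n → M)

lemma sum_partition_inD : ∑ i, ∑ j, ∑ k, ∑ l, x i j k l =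
    (∑ i, ∑ j, ∑ k, ∑ l, if inD4 i j k l then x i j k l else 0)
      + (∑ i, ∑ j, ∑ k, ∑ l, if inD2 i j k l then x i j k l else 0)
      + (∑ i, ∑ j, ∑ k, ∑ l, if inD3 i j k l then x i j k l else 0)
      + ∑ i, ∑ j, ∑ k, ∑ l, if inD1 i j k l then x i j k l else 0 := by
  simp only [← Finset.sum_add_distrib]
  refine Fintype.sum_congr _ _ fun i => Fintype.sum_congr _ _ fun j =>
    Fintype.sum_congr _ _ fun k => Fintype.sum_congr _ _ fun l => ?_
  unfold inD4 inD1 inD2 inD3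
  by_cases j = k <;> by_cases l = i <;> by_cases i = j <;> simp_all [eq_comm]

lemma sum_ite_fourth_eq_first_partition_inD :
    ∑ i, ∑ j, ∑ k, ∑ l, (if l = i then x i j k l else 0) =
      (∑ i, ∑ j, ∑ k, ∑ l, if inD2 i j k l then x i j k l else 0)
      + (∑ i, ∑ j, ∑ k, ∑ l, if inD1 i j k l then x i j k l else 0)
      + ∑ i, ∑ j, ∑ k, ∑ l, if inD0 i j k l then x i j k l else 0 := by
  simp only [← Finset.sum_add_distrib]
  refine Fintype.sum_congr _ _ fun i => Fintype.sum_congr _ _ fun j =>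
    Fintype.sum_congr _ _ fun k => Fintype.sum_congr _ _ fun l => ?_
  unfold inD0 inD1 inD2
  by_cases j = k <;> by_cases l = i <;> by_cases i = j <;> simp_all [eq_comm]

lemma sum_ite_third_eq_second_partition_inD :
    ∑ i, ∑ j, ∑ k, ∑ l, (if k = j then x i j k l else 0) =
      (∑ i, ∑ j, ∑ k, ∑ l, if inD3 i j k l then x i j k l else 0)
      + (∑ i, ∑ j, ∑ k, ∑ l, if inD1 i j k l then x i j k l else 0)
      + ∑ i, ∑ j, ∑ k, ∑ l, if inD0 i j k l then x i j k l else 0 := by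
  simp only [← Finset.sum_add_distrib]
  refine Fintype.sum_congr _ _ fun i => Fintype.sum_congr _ _ fun j =>
    Fintype.sum_congr _ _ fun k => Fintype.sum_congr _ _ fun l => ?_
  unfold inD0 inD1 inD3
  by_cases j = k <;> by_cases l = i <;> by_cases i = j <;> simp_all [eq_comm]

end IndexSets

section Splitting

variable {n : ℕ} (a b : Matrix (Fin n) (Fin n) ℂ)

lemma hsInner_ba_ba_split : hsInner (b * a) (b * a) =
    (∑ i, ∑ j, ∑ k, ∑ l, if i ≠ k then a i j * conj (a k j) * b l i * conj (b l k) else 0)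
      + ∑ i, ∑ j, ∑ k, ∑ l,
          if l = i then ((normSq (a i j) * normSq (b k l) : ℝ) : ℂ) else 0 := by
  have hdiag : (∑ i, ∑ j, ∑ k, ∑ l,
        if i = k then a i j * conj (a k j) * b l i * conj (b l k) else 0)
      = ∑ i, ∑ j, ∑ k, ∑ l, if l = i then ((normSq (a i j) * normSq (b k l) : ℝ) : ℂ) else 0 := by
    simp [mul_conj_mul_mul_conj]
  simp only [hsInner_ba_ba_eq_sum, ne_eq, ite_not_eq_sub, Finset.sum_sub_distrib, ← hdiag]
  abel

lemma hsInner_ab_ab_split : hsInner (a * b) (a * b) =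
    (∑ i, ∑ j, ∑ k, ∑ l, if j ≠ l then a i j * conj (a i l) * b j k * conj (b l k) else 0)
      + ∑ i, ∑ j, ∑ k, ∑ l,
          if k = j then ((normSq (a i j) * normSq (b k l) : ℝ) : ℂ) else 0 := by
  have hdiag : (∑ i, ∑ j, ∑ k, ∑ l,
        if j = l then a i j * conj (a i l) * b j k * conj (b l k) else 0)
      = ∑ i, ∑ j, ∑ k, ∑ l, if k = j then ((normSq (a i j) * normSq (b k l) : ℝ) : ℂ) else 0 := by
    simp [mul_conj_mul_mul_conj]
  simp only [hsInner_ab_ab_eq_sum, ne_eq, ite_not_eq_sub, Finset.sum_sub_distrib, ← hdiag]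
  abel

open Classical in
lemma re_hsInner_ba_ab_split : (((hsInner (b * a) (a * b)).re : ℝ) : ℂ) =
    (∑ i, ∑ j, ∑ k, ∑ l, if ¬ inD0 i j k l then
        (((a i j * conj (a l k) * b j k * conj (b i l)).re : ℝ) : ℂ) else 0)
      + ∑ i, ∑ j, ∑ k, ∑ l,
          if inD0 i j k l then ((normSq (a i j) * normSq (b k l) : ℝ) : ℂ) else 0 := by
  have hdiag : (∑ i, ∑ j, ∑ k, ∑ l, if inD0 i j k l then
        (((a i j * conj (a l k) * b j k * conj (b i l)).re : ℝ) : ℂ) else 0)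
      = ∑ i, ∑ j, ∑ k, ∑ l,
          if inD0 i j k l then ((normSq (a i j) * normSq (b k l) : ℝ) : ℂ) else 0 := by
    congr! 5 with i - j - k - l - h
    obtain ⟨rfl, rfl, rfl⟩ := h
    rw [mul_conj_mul_mul_conj, ofReal_re]
  simp only [hsInner_ba_ab_eq_sum, re_sum, ofReal_sum, ite_not_eq_sub, Finset.sum_sub_distrib,
    ← hdiag]
  abel

end Splitting

open Classical in
theorem key_decomposition (n : ℕ) (a b : Matrix (Fin n) (Fin n) ℂ) (q : ℝ) :
    ((cq q * frobSq a * frobSq b - fFun a b q : ℝ) : ℂ)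
    = ((cq q : ℝ) : ℂ) * (∑ i : Fin n, ∑ j : Fin n, ∑ k : Fin n, ∑ l : Fin n,
        if inD4 i j k l then ((Complex.normSq (a i j) * Complex.normSq (b k l) : ℝ) : ℂ) else 0)
      + ((cq q - 1 : ℝ) : ℂ) * (∑ i : Fin n, ∑ j : Fin n, ∑ k : Fin n, ∑ l : Fin n,
          if inD2 i j k l then ((Complex.normSq (a i j) * Complex.normSq (b k l) : ℝ) : ℂ) else 0)
      + ((cq q - q : ℝ) : ℂ) * (∑ i : Fin n, ∑ j : Fin n, ∑ k : Fin n, ∑ l : Fin n,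
          if inD3 i j k l then ((Complex.normSq (a i j) * Complex.normSq (b k l) : ℝ) : ℂ) else 0)
      + ((cq q - 1 - q : ℝ) : ℂ) * (∑ i : Fin n, ∑ j : Fin n, ∑ k : Fin n, ∑ l : Fin n,
          if inD1 i j k l then ((Complex.normSq (a i j) * Complex.normSq (b k l) : ℝ) : ℂ) else 0)
      - (∑ i : Fin n, ∑ j : Fin n, ∑ k : Fin n, ∑ l : Fin n,
          if i ≠ k then a i j * starRingEnd ℂ (a k j) * b l i * starRingEnd ℂ (b l k) else 0)
      - ((q : ℝ) : ℂ) * (∑ i : Fin n, ∑ j : Fin n, ∑ k : Fin n, ∑ l : Fin n,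
          if j ≠ l then a i j * starRingEnd ℂ (a i l) * b j k * starRingEnd ℂ (b l k) else 0)
      + ((1 + q : ℝ) : ℂ) * (∑ i : Fin n, ∑ j : Fin n, ∑ k : Fin n, ∑ l : Fin n,
          if ¬ inD0 i j k l then
            (((a i j * starRingEnd ℂ (a l k) * b j k * starRingEnd ℂ (b i l)).re : ℝ) : ℂ)
          else 0) := by
  have hprod := (frobSq_mul_frobSq_eq_sum a b).trans (sum_partition_inD _)
  have hleft := sum_ite_fourth_eq_first_partition_inD
    fun i j k l => ((normSq (a i j) * normSq (b k l) : ℝ) : ℂ)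
  have hmid := sum_ite_third_eq_second_partition_inD
    fun i j k l => ((normSq (a i j) * normSq (b k l) : ℝ) : ℂ)
  have hf := ofReal_fFun a b q
  have hBA := hsInner_ba_ba_split a b
  have hAB := hsInner_ab_ab_split a b
  have hRe := re_hsInner_ba_ab_split a b
  push_cast at hprod hf hBA hAB hRe hleft hmid ⊢
  linear_combination (cq q : ℂ) * hprod - hf - hBA - q * hAB + (1 + q) * hRe - hleft - q * hmid
end
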